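/- Let d ≥ 2. For i ∈ Fin d, set c_i = √(d/(d−1)) · e_i ∈ EuclideanSpace ℝ (Fin d) and p_i = ((√d + 1)/(d−1)^{3/2}) · ((1,…,1) − e_i). Then for all i ≠ j, ‖p_i − c_j‖₂ = 1; i.e., the point p_i lies on the boundary of every one of the d unit balls closedBall(c_j, 1) with j ≠ i, and is therefore a common point of the d−1 balls obtained by omitting the i-th ball. -/

import Mathlib

/-- The all-ones vector `(1, …, 1)` of `ℝ^d`. -/
def allOnes (d : ℕ) : EuclideanSpace ℝ (Fin d) := WithLp.toLp 2 (fun _ => 1)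

/-- For `d ≥ 2`, with centers `c_i = √(d/(d-1)) · e_i` and points
`p_i = ((√d + 1)/(d-1)^{3/2}) · ((1,…,1) - e_i)`, the point `p_i` is at distance
exactly `1` from every center `c_j` with `j ≠ i`: it lies on the boundary of each of
the `d - 1` unit balls obtained by omitting the `i`-th one, and hence is a common
point of that subfamily. -/
theorem tangency_points_of_omitted_subfamilies (d : ℕ) (hd : 2 ≤ d) :
    ∀ i j : Fin d, i ≠ j →
      ‖((Real.sqrt (d : ℝ) + 1) / ((d : ℝ) - 1) ^ ((3 : ℝ) / 2)) •
          (allOnes d - EuclideanSpace.single i (1 : ℝ)) -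
        Real.sqrt ((d : ℝ) / ((d : ℝ) - 1)) • EuclideanSpace.single j (1 : ℝ)‖ = 1 := by
  intro i j hij
  have hd2 : (2:ℝ) ≤ (d:ℝ) := by exact_mod_cast hd
  have hApos : (0:ℝ) < (d:ℝ) - 1 := by linarith
  set t : ℝ := Real.sqrt ((d:ℝ) - 1) with ht
  have ht2 : t^2 = (d:ℝ) - 1 := Real.sq_sqrt hApos.le
  have htpos : 0 < t := Real.sqrt_pos.mpr hApos
  set r : ℝ := Real.sqrt d with hr
  have hr2 : r^2 = (d:ℝ) := Real.sq_sqrt (by positivity)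
  have hS : ((d:ℝ) - 1) ^ ((3:ℝ)/2) = t^3 := by
    rw [← ht2, ← Real.rpow_natCast t 2, ← Real.rpow_mul htpos.le, ← Real.rpow_natCast t 3]
    norm_num
  have hβ : Real.sqrt ((d:ℝ)/((d:ℝ)-1)) = r / t := by
    rw [Real.sqrt_div (by positivity)]
  set α : ℝ := (r + 1) / t^3 with hα
  set β : ℝ := r / t with hβ'
  rw [hS, hβ, EuclideanSpace.norm_eq]
  have hcoord : ∀ k : Fin d,
      ‖(α • (allOnes d - EuclideanSpace.single i (1:ℝ)) -
          β • EuclideanSpace.single j (1:ℝ)) k‖ ^ 2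
        = α^2 + (if k = i then -α^2 else 0) + (if k = j then (α-β)^2 - α^2 else 0) := by
    intro k
    simp only [PiLp.sub_apply, PiLp.smul_apply, EuclideanSpace.single_apply, allOnes,
      smul_eq_mul, Real.norm_eq_abs, sq_abs]
    by_cases hki : k = i
    · have hkj : k ≠ j := by rw [hki]; exact hij
      simp [hki, hkj, hij]
    · by_cases hkj : k = j
      · have : ¬ (j = i) := fun h => hij h.symm
        simp [hki, hkj, this]
      · simp [hki, hkj]
  rw [show (∑ k : Fin d, ‖(α • (allOnes d - EuclideanSpace.single i (1:ℝ)) -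
          β • EuclideanSpace.single j (1:ℝ)) k‖ ^ 2) =
      ∑ k : Fin d, (α^2 + (if k = i then -α^2 else 0) + (if k = j then (α-β)^2 - α^2 else 0))
    from Finset.sum_congr rfl (fun k _ => hcoord k)]
  rw [Finset.sum_add_distrib, Finset.sum_add_distrib, Finset.sum_ite_eq', Finset.sum_ite_eq',
    Finset.sum_const, Finset.card_univ, Fintype.card_fin]
  simp only [Finset.mem_univ, if_true, nsmul_eq_mul]
  have key : (d:ℝ) * α^2 + -α^2 + ((α - β)^2 - α^2) = 1 := by
    have hrt : r^2 = t^2 + 1 := by rw [hr2]; linarith [ht2]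
    have hd' : (d:ℝ) = t^2 + 1 := by linarith [ht2]
    rw [hα, hβ', hd']
    have htne : t ≠ 0 := htpos.ne'
    field_simp
    linear_combination ((t^2-1)*t^2) * hrt
  rw [key, Real.sqrt_one]
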